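/- Let m ≥ 1 and let A be the m×m WSGD Toeplitz matrix built from the weights w_k for (p,q)=(1,0) of order α. If α = 1, then every complex eigenvalue λ of A satisfies Re(λ) = 0. If 1 < α ≤ 2, then every complex eigenvalue λ of A satisfies Re(λ) < 0, and A is negative definite, i.e., xᵀ A x < 0 for every nonzero x ∈ ℝ^m. -/

import Mathlib

open Matrix

/-- Grünwald coefficients `g_k = (-1)^k * binom(α, k)`. -/
noncomputable def gru (α : ℝ) (k : ℕ) : ℝ :=
  (-1 : ℝ) ^ k * (∏ i ∈ Finset.range k, (α - (i : ℝ))) / (Nat.factorial k : ℝ)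

/-- WSGD weights for `(p,q) = (1,0)`. -/
noncomputable def w10 (α : ℝ) : ℕ → ℝ
  | 0 => α / 2 * gru α 0
  | k + 1 => α / 2 * gru α (k + 1) + (2 - α) / 2 * gru α k

/-- WSGD weights for `(p,q) = (1,-1)`. -/
noncomputable def w1m1 (α : ℝ) : ℕ → ℝ
  | 0 => (2 + α) / 4 * gru α 0
  | 1 => (2 + α) / 4 * gru α 1
  | k + 2 => (2 + α) / 4 * gru α (k + 2) + (2 - α) / 4 * gru α k

/-- The m×m WSGD Toeplitz matrix: `A i j = w (i - j + 1)` when `i - j + 1 ≥ 0`, else `0`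
(0-based indices give the same entries as the 1-based description). -/
noncomputable def wsgdMatrix (w : ℕ → ℝ) (m : ℕ) : Matrix (Fin m) (Fin m) ℝ :=
  Matrix.of fun i j => if (j : ℕ) ≤ (i : ℕ) + 1 then w ((i : ℕ) + 1 - (j : ℕ)) else 0

/-!
Write `H = A + Aᵀ`, so that `xᵀ A x = xᵀ H x / 2`. For a real matrix and an eigenpair `A v = λ v`
with `v = a + i b`, taking real parts in `v* A v = λ ‖v‖²` gives `Re λ · ‖v‖² = aᵀ A a + bᵀ A b`,
so everything reduces to the sign of the quadratic form.

For `α = 1` the weights are `(1/2, 0, -1/2, 0, 0, …)`, hence `H = 0`. For `1 < α ≤ 2` the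
off-diagonal entries of `H` are nonnegative (`w₀ + w₂ > 0` and `w_k ≥ 0` for `k ≥ 3`), and its row
sums are sums of partial sums `w₀ + ⋯ + w_n = α/2 g_n(α-1) + (2-α)/2 g_{n-1}(α-1) ≤ 0` (`n ≥ 2`),
because partial sums of Grünwald coefficients are Grünwald coefficients of `α - 1`, which are
`≤ 0` past index `0`. The identity `2 xᵀHx = 2 Σᵢ (Σⱼ Hᵢⱼ) xᵢ² - Σᵢⱼ Hᵢⱼ (xᵢ - xⱼ)²` then gives
`xᵀHx ≤ 0`; the first row sum is `w₁ + (w₀ + ⋯ + w_m) < 0` and `H` is positive along the path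
`0 - 1 - ⋯ - (m-1)`, so equality forces `x = 0`.
-/

lemma sum_normSq_pos_of_ne_zero {n : Type*} [Fintype n] {v : n → ℂ} (hv : v ≠ 0) :
    0 < ∑ i, Complex.normSq (v i) := by
  obtain ⟨i, hi⟩ := Function.ne_iff.1 hv
  exact Finset.sum_pos' (fun j _ => Complex.normSq_nonneg _)
    ⟨i, Finset.mem_univ _, Complex.normSq_pos.2 hi⟩

namespace Matrix

variable {n : Type*}

lemma apply_mul_sq_sub_nonneg {H : Matrix n n ℝ} (hoff : ∀ i j, i ≠ j → 0 ≤ H i j) (x : n → ℝ)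
    (i j : n) : 0 ≤ H i j * (x i - x j) ^ 2 := by
  obtain rfl | hij := eq_or_ne i j
  · simp
  · exact mul_nonneg (hoff i j hij) (sq_nonneg _)

variable [Fintype n]

lemma dotProduct_mulVec_add_transpose_self (A : Matrix n n ℝ) (x : n → ℝ) :
    x ⬝ᵥ (A + Aᵀ) *ᵥ x = 2 * (x ⬝ᵥ A *ᵥ x) := by
  rw [add_mulVec, dotProduct_add, mulVec_transpose, dotProduct_comm x (x ᵥ* A),
    ← dotProduct_mulVec]
  ring

lemma dotProduct_mulVec_self_eq_sum (A : Matrix n n ℝ) (x : n → ℝ) :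
    x ⬝ᵥ A *ᵥ x = ∑ i, ∑ j, A i j * x i * x j := by
  simp only [dotProduct, mulVec, Finset.mul_sum]
  exact Finset.sum_congr rfl fun i _ => Finset.sum_congr rfl fun j _ => by ring

lemma IsSymm.two_mul_dotProduct_mulVec_self {H : Matrix n n ℝ} (hH : H.IsSymm) (x : n → ℝ) :
    2 * (x ⬝ᵥ H *ᵥ x) =
      2 * ∑ i, (∑ j, H i j) * x i ^ 2 - ∑ i, ∑ j, H i j * (x i - x j) ^ 2 := by
  have hswap : ∑ i, ∑ j, H i j * x j ^ 2 = ∑ i, ∑ j, H i j * x i ^ 2 := by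
    rw [Finset.sum_comm]
    simp only [hH.apply]
  have hexpand : ∑ i, ∑ j, H i j * (x i - x j) ^ 2 =
      ∑ i, ∑ j, H i j * x i ^ 2 - 2 * ∑ i, ∑ j, H i j * x i * x j + ∑ i, ∑ j, H i j * x j ^ 2 := by
    simp only [Finset.mul_sum, ← Finset.sum_sub_distrib, ← Finset.sum_add_distrib]
    exact Finset.sum_congr rfl fun i _ => Finset.sum_congr rfl fun j _ => by ring
  rw [hexpand, hswap, dotProduct_mulVec_self_eq_sum]
  simp only [Finset.sum_mul]
  ring

lemma IsSymm.dotProduct_mulVec_self_nonpos {H : Matrix n n ℝ} (hH : H.IsSymm)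
    (hoff : ∀ i j, i ≠ j → 0 ≤ H i j) (hrow : ∀ i, ∑ j, H i j ≤ 0) (x : n → ℝ) :
    x ⬝ᵥ H *ᵥ x ≤ 0 := by
  have hdiag : ∑ i, (∑ j, H i j) * x i ^ 2 ≤ 0 :=
    Finset.sum_nonpos fun i _ => mul_nonpos_of_nonpos_of_nonneg (hrow i) (sq_nonneg _)
  have hedge : 0 ≤ ∑ i, ∑ j, H i j * (x i - x j) ^ 2 :=
    Finset.sum_nonneg fun i _ => Finset.sum_nonneg fun j _ => apply_mul_sq_sub_nonneg hoff x i j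
  linarith [hH.two_mul_dotProduct_mulVec_self x]

lemma IsSymm.apply_eq_zero_and_apply_eq_of_dotProduct_mulVec_self_eq_zero {H : Matrix n n ℝ}
    (hH : H.IsSymm) (hoff : ∀ i j, i ≠ j → 0 ≤ H i j) (hrow : ∀ i, ∑ j, H i j ≤ 0) {x : n → ℝ}
    (hx : x ⬝ᵥ H *ᵥ x = 0) :
    (∀ i, ∑ j, H i j < 0 → x i = 0) ∧ (∀ i j, 0 < H i j → x i = x j) := by
  have hdiag_nonpos i : (∑ j, H i j) * x i ^ 2 ≤ 0 :=
    mul_nonpos_of_nonpos_of_nonneg (hrow i) (sq_nonneg _)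
  have hdiag : ∑ i, (∑ j, H i j) * x i ^ 2 ≤ 0 := Finset.sum_nonpos fun i _ => hdiag_nonpos i
  have hedge : 0 ≤ ∑ i, ∑ j, H i j * (x i - x j) ^ 2 :=
    Finset.sum_nonneg fun i _ => Finset.sum_nonneg fun j _ => apply_mul_sq_sub_nonneg hoff x i j
  have hsplit := hH.two_mul_dotProduct_mulVec_self x
  rw [hx] at hsplit
  constructor
  · intro i hi
    have := (Finset.sum_eq_zero_iff_of_nonpos fun i _ => hdiag_nonpos i).1 (by linarith) i
      (Finset.mem_univ i)
    simpa [hi.ne] using this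
  · intro i j hij
    have hrow_i := (Finset.sum_eq_zero_iff_of_nonneg fun i _ => Finset.sum_nonneg fun j _ =>
      apply_mul_sq_sub_nonneg hoff x i j).1 (by linarith) i (Finset.mem_univ i)
    have := (Finset.sum_eq_zero_iff_of_nonneg fun j _ => apply_mul_sq_sub_nonneg hoff x i j).1
      hrow_i j (Finset.mem_univ j)
    simpa [hij.ne', sub_eq_zero] using this

lemma IsSymm.dotProduct_mulVec_self_neg {m : ℕ} {H : Matrix (Fin m) (Fin m) ℝ} (hH : H.IsSymm)
    (hoff : ∀ i j, i ≠ j → 0 ≤ H i j) (hrow : ∀ i, ∑ j, H i j ≤ 0)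
    (hfirst : ∀ i : Fin m, (i : ℕ) = 0 → ∑ j, H i j < 0)
    (hpath : ∀ i j : Fin m, (j : ℕ) = i + 1 → 0 < H i j) {x : Fin m → ℝ} (hx : x ≠ 0) :
    x ⬝ᵥ H *ᵥ x < 0 := by
  refine (hH.dotProduct_mulVec_self_nonpos hoff hrow x).lt_of_ne fun hzero => hx ?_
  obtain ⟨hzero_of_neg, hconst⟩ :=
    hH.apply_eq_zero_and_apply_eq_of_dotProduct_mulVec_self_eq_zero hoff hrow hzero
  have hvanish : ∀ k (hk : k < m), x ⟨k, hk⟩ = 0 := by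
    intro k
    induction k with
    | zero => exact fun hk => hzero_of_neg _ (hfirst _ rfl)
    | succ k ih =>
      intro hk
      rw [← hconst ⟨k, by omega⟩ ⟨k + 1, hk⟩ (hpath _ _ rfl), ih]
  exact funext fun i => hvanish i i.2

lemma re_mul_sum_normSq_of_mulVec_eq_smul (M : Matrix n n ℝ) {v : n → ℂ} {lam : ℂ}
    (hv : (M.map Complex.ofReal) *ᵥ v = lam • v) :
    lam.re * ∑ i, Complex.normSq (v i) =
      (fun i => (v i).re) ⬝ᵥ M *ᵥ (fun i => (v i).re) +
        (fun i => (v i).im) ⬝ᵥ M *ᵥ (fun i => (v i).im) := by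
  have hform : star v ⬝ᵥ (M.map Complex.ofReal) *ᵥ v = lam * ∑ i, (Complex.normSq (v i) : ℂ) := by
    rw [hv, dotProduct_smul, smul_eq_mul]
    congr 1
    exact Finset.sum_congr rfl fun i _ => by simp [Complex.normSq_eq_conj_mul_self]
  have hre := congrArg Complex.re hform
  rw [← Complex.ofReal_sum, Complex.re_mul_ofReal] at hre
  rw [← hre, dotProduct_mulVec_self_eq_sum, dotProduct_mulVec_self_eq_sum, ← Finset.sum_add_distrib]
  simp only [dotProduct, mulVec, Finset.mul_sum, Complex.re_sum]
  refine Finset.sum_congr rfl fun i _ => ?_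
  rw [← Finset.sum_add_distrib]
  refine Finset.sum_congr rfl fun j _ => ?_
  simp only [Pi.star_apply, RCLike.star_def, map_apply, Complex.mul_re, Complex.mul_im,
    Complex.conj_re, Complex.conj_im, Complex.ofReal_re, Complex.ofReal_im]
  ring

lemma re_eq_zero_of_mulVec_eq_smul {M : Matrix n n ℝ} (hM : ∀ x, x ⬝ᵥ M *ᵥ x = 0)
    {v : n → ℂ} (hv0 : v ≠ 0) {lam : ℂ} (hv : (M.map Complex.ofReal) *ᵥ v = lam • v) :
    lam.re = 0 := by
  have h := re_mul_sum_normSq_of_mulVec_eq_smul M hv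
  rw [hM, hM, add_zero] at h
  exact (mul_eq_zero.1 h).resolve_right (sum_normSq_pos_of_ne_zero hv0).ne'

lemma re_neg_of_mulVec_eq_smul {M : Matrix n n ℝ} (hM : ∀ x, x ≠ 0 → x ⬝ᵥ M *ᵥ x < 0)
    {v : n → ℂ} (hv0 : v ≠ 0) {lam : ℂ} (hv : (M.map Complex.ofReal) *ᵥ v = lam • v) :
    lam.re < 0 := by
  have hM_nonpos x : x ⬝ᵥ M *ᵥ x ≤ 0 := by
    obtain rfl | hx := eq_or_ne x 0
    · simp
    · exact (hM x hx).le
  have hsum : (fun i => (v i).re) ⬝ᵥ M *ᵥ (fun i => (v i).re) +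
      (fun i => (v i).im) ⬝ᵥ M *ᵥ (fun i => (v i).im) < 0 := by
    by_cases hre : (fun i => (v i).re) = 0
    · have him : (fun i => (v i).im) ≠ 0 := fun him =>
        hv0 (funext fun i => Complex.ext (congrFun hre i) (congrFun him i))
      linarith [hM_nonpos fun i => (v i).re, hM _ him]
    · linarith [hM _ hre, hM_nonpos fun i => (v i).im]
  rw [← re_mul_sum_normSq_of_mulVec_eq_smul M hv] at hsum
  exact neg_of_mul_neg_left hsum (sum_normSq_pos_of_ne_zero hv0).le

end Matrix

section Grunwald

variable (α : ℝ)

lemma gru_zero : gru α 0 = 1 := by simp [gru]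

lemma gru_one : gru α 1 = -α := by simp [gru]

lemma gru_succ (k : ℕ) : gru α (k + 1) = gru α k * ((k : ℝ) - α) / (k + 1) := by
  simp only [gru, Finset.prod_range_succ, Nat.factorial_succ, pow_succ, Nat.cast_mul,
    Nat.cast_add, Nat.cast_one]
  field_simp
  ring

lemma gru_two : gru α 2 = α * (α - 1) / 2 := by
  rw [gru_succ, gru_one]
  push_cast
  ring

lemma gru_natCast_eq_zero {n k : ℕ} (h : n < k) : gru n k = 0 := by
  rw [gru, Finset.prod_eq_zero (Finset.mem_range.2 h) (sub_self _)]
  simp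

/-- Pascal's rule `binom(α, n+1) = binom(α-1, n+1) + binom(α-1, n)`, with signs. -/
lemma gru_succ_eq_sub (n : ℕ) : gru α (n + 1) = gru (α - 1) (n + 1) - gru (α - 1) n := by
  have hprod : ∏ i ∈ Finset.range (n + 1), (α - i) = α * ∏ i ∈ Finset.range n, (α - 1 - i) := by
    rw [Finset.prod_range_succ', mul_comm]
    push_cast
    simp only [sub_zero, sub_add_eq_sub_sub, sub_right_comm]
  simp only [gru, hprod, Finset.prod_range_succ, Nat.factorial_succ, pow_succ, Nat.cast_mul,
    Nat.cast_add, Nat.cast_one]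
  field_simp
  ring

lemma sum_range_gru (n : ℕ) : ∑ k ∈ Finset.range (n + 1), gru α k = gru (α - 1) n := by
  induction n with
  | zero => simp [gru_zero]
  | succ n ih => rw [Finset.sum_range_succ, ih, gru_succ_eq_sub]; ring

variable {α}

lemma gru_add_nonneg {n : ℕ} (hα : α ≤ n) (hn : 0 ≤ gru α n) (k : ℕ) : 0 ≤ gru α (n + k) := by
  induction k with
  | zero => exact hn
  | succ k ih =>
    rw [← add_assoc, gru_succ]
    have : α ≤ ((n + k : ℕ) : ℝ) := hα.trans (by exact_mod_cast Nat.le_add_right n k)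
    exact div_nonneg (mul_nonneg ih (by linarith)) (by positivity)

lemma gru_add_nonpos {n : ℕ} (hα : α ≤ n) (hn : gru α n ≤ 0) (k : ℕ) : gru α (n + k) ≤ 0 := by
  induction k with
  | zero => exact hn
  | succ k ih =>
    rw [← add_assoc, gru_succ]
    have : α ≤ ((n + k : ℕ) : ℝ) := hα.trans (by exact_mod_cast Nat.le_add_right n k)
    exact div_nonpos_of_nonpos_of_nonneg (mul_nonpos_of_nonpos_of_nonneg ih (by linarith))
      (by positivity)

end Grunwald

section Weights

lemma w10_zero (α : ℝ) : w10 α 0 = α / 2 := by simp [w10, gru_zero]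

lemma w10_one (α : ℝ) : w10 α 1 = (2 - α - α ^ 2) / 2 := by
  simp only [w10, zero_add, gru_one, gru_zero]
  ring

lemma w10_two (α : ℝ) : w10 α 2 = α * (α ^ 2 + α - 4) / 4 := by
  simp only [w10, Nat.reduceAdd, gru_two, gru_one]
  ring

lemma sum_range_w10 (α : ℝ) (n : ℕ) :
    ∑ k ∈ Finset.range (n + 2), w10 α k =
      α / 2 * gru (α - 1) (n + 1) + (2 - α) / 2 * gru (α - 1) n := by
  rw [← sum_range_gru, ← sum_range_gru, Finset.mul_sum, Finset.mul_sum,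
    Finset.sum_range_succ' _ (n + 1), Finset.sum_range_succ' (fun k => α / 2 * gru α k) (n + 1)]
  simp only [w10, Finset.sum_add_distrib]
  ring

lemma w10_one_neg {α : ℝ} (h1 : 1 < α) : w10 α 1 < 0 := by
  rw [w10_one]
  nlinarith

lemma w10_zero_add_w10_two_pos {α : ℝ} (h1 : 1 < α) : 0 < w10 α 0 + w10 α 2 := by
  have : 0 < α * (α + 2) * (α - 1) := mul_pos (by positivity) (by linarith)
  rw [w10_zero, w10_two]
  nlinarith

lemma w10_nonneg {α : ℝ} (h1 : 1 < α) (h2 : α ≤ 2) {k : ℕ} (hk : 3 ≤ k) : 0 ≤ w10 α k := by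
  obtain ⟨k, rfl⟩ := Nat.exists_eq_add_of_le' hk
  have hg j (hj : 2 ≤ j) : 0 ≤ gru α j := by
    obtain ⟨j, rfl⟩ := Nat.exists_eq_add_of_le hj
    exact gru_add_nonneg (by norm_num; linarith) (by rw [gru_two]; nlinarith) j
  show 0 ≤ α / 2 * gru α (k + 3) + (2 - α) / 2 * gru α (k + 2)
  exact add_nonneg (mul_nonneg (by linarith) (hg _ (by omega)))
    (mul_nonneg (by linarith) (hg _ (by omega)))

lemma sum_range_w10_nonpos {α : ℝ} (h1 : 1 < α) (h2 : α ≤ 2) {n : ℕ} (hn : 3 ≤ n) :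
    ∑ k ∈ Finset.range n, w10 α k ≤ 0 := by
  have hg j (hj : 1 ≤ j) : gru (α - 1) j ≤ 0 := by
    obtain ⟨j, rfl⟩ := Nat.exists_eq_add_of_le hj
    exact gru_add_nonpos (by norm_num; linarith) (by rw [gru_one]; linarith) j
  obtain ⟨n, rfl⟩ := Nat.exists_eq_add_of_le' (show 2 ≤ n by omega)
  rw [sum_range_w10]
  exact add_nonpos (mul_nonpos_of_nonneg_of_nonpos (by linarith) (hg _ (by omega)))
    (mul_nonpos_of_nonneg_of_nonpos (by linarith) (hg _ (by omega)))

lemma w10_one_eq_zero_of_three_le {k : ℕ} (hk : 3 ≤ k) : w10 1 k = 0 := by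
  obtain ⟨k, rfl⟩ := Nat.exists_eq_add_of_le' hk
  show 1 / 2 * gru 1 (k + 3) + (2 - 1) / 2 * gru 1 (k + 2) = 0
  rw [← Nat.cast_one, gru_natCast_eq_zero (by omega), gru_natCast_eq_zero (by omega)]
  simp

end Weights

section WsgdMatrix

open Finset

variable (w : ℕ → ℝ) {m : ℕ}

lemma wsgdMatrix_apply (i j : Fin m) :
    wsgdMatrix w m i j = if (j : ℕ) ≤ i + 1 then w (i + 1 - j) else 0 := rfl

lemma sum_wsgdMatrix_row (i : Fin m) :
    ∑ j, wsgdMatrix w m i j =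
      ∑ k ∈ range (i + 2), w k - if (i : ℕ) + 1 = m then w 0 else 0 := by
  simp only [wsgdMatrix_apply]
  rw [Fin.sum_univ_eq_sum_range (fun j => if j ≤ (i : ℕ) + 1 then w (i + 1 - j) else 0)]
  have hi := i.2
  generalize (i : ℕ) = a at hi ⊢
  obtain ⟨r, rfl⟩ := Nat.exists_eq_add_of_lt hi
  have hreflect : ∑ j ∈ range (a + 2), (if j ≤ a + 1 then w (a + 1 - j) else 0) =
      ∑ k ∈ range (a + 2), w k := by
    rw [← sum_range_reflect w]
    exact sum_congr rfl fun j hj => by rw [if_pos (by simp at hj; omega)]; congr 1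
  cases r with
  | zero =>
    rw [← hreflect, sum_range_succ _ (a + 1)]
    simp
  | succ r =>
    rw [show a + (r + 1) + 1 = a + 2 + r by ring, sum_range_add, hreflect,
      sum_eq_zero fun t _ => if_neg (by omega), if_neg (by omega)]
    simp

lemma sum_wsgdMatrix_col (j : Fin m) :
    ∑ i, wsgdMatrix w m i j =
      ∑ k ∈ range (m - j + 1), w k - if (j : ℕ) = 0 then w 0 else 0 := by
  simp only [wsgdMatrix_apply]
  rw [Fin.sum_univ_eq_sum_range (fun i => if (j : ℕ) ≤ i + 1 then w (i + 1 - j) else 0)]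
  have hj := j.2
  generalize (j : ℕ) = b at hj ⊢
  cases b with
  | zero =>
    rw [sum_range_succ']
    simp
  | succ b =>
    obtain ⟨r, rfl⟩ := Nat.exists_eq_add_of_lt hj
    rw [show b + 1 + r + 1 = b + (r + 2) by ring, sum_range_add,
      sum_eq_zero fun t ht => if_neg (by simp at ht; omega), if_neg (by omega)]
    simp only [zero_add, sub_zero]
    exact sum_congr (by congr 1; omega) fun t _ => by rw [if_pos (by omega)]; congr 1; omega

lemma wsgdMatrix_add_transpose_apply_self (i : Fin m) :
    (wsgdMatrix w m + (wsgdMatrix w m)ᵀ) i i = 2 * w 1 := by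
  simp only [Matrix.add_apply, Matrix.transpose_apply, wsgdMatrix_apply, le_add_iff_nonneg_right,
    zero_le, if_true, add_tsub_cancel_left]
  ring

lemma wsgdMatrix_add_transpose_apply_of_lt {i j : Fin m} (hij : (i : ℕ) < j) :
    (wsgdMatrix w m + (wsgdMatrix w m)ᵀ) i j =
      (if (j : ℕ) = i + 1 then w 0 else 0) + w (j + 1 - i) := by
  have hji : (i : ℕ) ≤ j + 1 := by omega
  simp only [Matrix.add_apply, Matrix.transpose_apply, wsgdMatrix_apply, if_pos hji]
  congr 1
  by_cases hsucc : (j : ℕ) = i + 1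
  · rw [if_pos hsucc.le, if_pos hsucc, hsucc, Nat.sub_self]
  · rw [if_neg (by omega), if_neg hsucc]

lemma sum_wsgdMatrix_add_transpose_row (i : Fin m) :
    ∑ j, (wsgdMatrix w m + (wsgdMatrix w m)ᵀ) i j =
      (∑ k ∈ range (i + 2), w k - if (i : ℕ) + 1 = m then w 0 else 0) +
        (∑ k ∈ range (m - i + 1), w k - if (i : ℕ) = 0 then w 0 else 0) := by
  simp only [Matrix.add_apply, Matrix.transpose_apply, sum_add_distrib,
    sum_wsgdMatrix_row, sum_wsgdMatrix_col]

end WsgdMatrix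

section Wsgd10

variable {α : ℝ} {m : ℕ}

lemma wsgd10_add_transpose_apply_nonneg (h1 : 1 < α) (h2 : α ≤ 2) {i j : Fin m} (hij : i ≠ j) :
    0 ≤ (wsgdMatrix (w10 α) m + (wsgdMatrix (w10 α) m)ᵀ) i j := by
  wlog hlt : (i : ℕ) < j generalizing i j
  · rw [← (Matrix.isSymm_add_transpose_self _).apply]
    exact this hij.symm (by omega)
  rw [wsgdMatrix_add_transpose_apply_of_lt _ hlt]
  by_cases hsucc : (j : ℕ) = i + 1
  · rw [if_pos hsucc, hsucc, show (i : ℕ) + 1 + 1 - i = 2 by omega]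
    exact (w10_zero_add_w10_two_pos h1).le
  · rw [if_neg hsucc, zero_add]
    exact w10_nonneg h1 h2 (by omega)

lemma wsgd10_add_transpose_apply_succ_pos (h1 : 1 < α) {i j : Fin m} (hij : (j : ℕ) = i + 1) :
    0 < (wsgdMatrix (w10 α) m + (wsgdMatrix (w10 α) m)ᵀ) i j := by
  rw [wsgdMatrix_add_transpose_apply_of_lt _ (by omega), if_pos hij, hij,
    show (i : ℕ) + 1 + 1 - i = 2 by omega]
  exact w10_zero_add_w10_two_pos h1

lemma sum_wsgd10_add_transpose_row_neg (h1 : 1 < α) (h2 : α ≤ 2) {i : Fin m}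
    (hi : (i : ℕ) = 0 ∨ (i : ℕ) + 1 = m) :
    ∑ j, (wsgdMatrix (w10 α) m + (wsgdMatrix (w10 α) m)ᵀ) i j < 0 := by
  have hsum2 : ∑ k ∈ Finset.range 2, w10 α k = w10 α 0 + w10 α 1 := by
    simp [Finset.sum_range_succ]
  have hw1 := w10_one_neg h1
  rw [sum_wsgdMatrix_add_transpose_row]
  by_cases hm : m = 1
  · subst hm
    simp only [show (i : ℕ) = 0 by omega, if_true, zero_add, hsum2]
    linarith
  · have hsum := sum_range_w10_nonpos h1 h2 (show 3 ≤ m + 1 by omega)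
    rcases hi with hi | hi
    · rw [hi, if_neg (by omega), if_pos rfl, Nat.sub_zero, hsum2]
      linarith
    · rw [if_pos hi, if_neg (by omega), show (i : ℕ) + 2 = m + 1 by omega,
        show m - i + 1 = 2 by omega, hsum2]
      linarith

lemma sum_wsgd10_add_transpose_row_nonpos (h1 : 1 < α) (h2 : α ≤ 2) (i : Fin m) :
    ∑ j, (wsgdMatrix (w10 α) m + (wsgdMatrix (w10 α) m)ᵀ) i j ≤ 0 := by
  by_cases hi : (i : ℕ) = 0 ∨ (i : ℕ) + 1 = m
  · exact (sum_wsgd10_add_transpose_row_neg h1 h2 hi).le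
  rw [sum_wsgdMatrix_add_transpose_row, if_neg (by omega), if_neg (by omega)]
  linarith [sum_range_w10_nonpos h1 h2 (show 3 ≤ (i : ℕ) + 2 by omega),
    sum_range_w10_nonpos h1 h2 (show 3 ≤ m - i + 1 by omega)]

lemma wsgd10_dotProduct_mulVec_self_neg (h1 : 1 < α) (h2 : α ≤ 2) {x : Fin m → ℝ} (hx : x ≠ 0) :
    x ⬝ᵥ wsgdMatrix (w10 α) m *ᵥ x < 0 := by
  have h := (Matrix.isSymm_add_transpose_self (wsgdMatrix (w10 α) m)).dotProduct_mulVec_self_neg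
    (fun i j hij => wsgd10_add_transpose_apply_nonneg h1 h2 hij)
    (sum_wsgd10_add_transpose_row_nonpos h1 h2)
    (fun i hi => sum_wsgd10_add_transpose_row_neg h1 h2 (Or.inl hi))
    (fun i j hij => wsgd10_add_transpose_apply_succ_pos h1 hij) hx
  rw [Matrix.dotProduct_mulVec_add_transpose_self] at h
  linarith

lemma wsgd10_one_add_transpose : wsgdMatrix (w10 1) m + (wsgdMatrix (w10 1) m)ᵀ = 0 := by
  ext i j
  wlog hle : (i : ℕ) ≤ j generalizing i j
  · rw [← (Matrix.isSymm_add_transpose_self _).apply]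
    exact this j i (by omega)
  rcases hle.lt_or_eq with hlt | heq
  · rw [wsgdMatrix_add_transpose_apply_of_lt _ hlt]
    by_cases hsucc : (j : ℕ) = i + 1
    · rw [if_pos hsucc, hsucc, show (i : ℕ) + 1 + 1 - i = 2 by omega, w10_zero, w10_two]
      norm_num
    · rw [if_neg hsucc, w10_one_eq_zero_of_three_le (by omega)]
      simp
  · rw [Fin.ext heq, wsgdMatrix_add_transpose_apply_self, w10_one]
    norm_num

lemma wsgd10_one_dotProduct_mulVec_self (x : Fin m → ℝ) :
    x ⬝ᵥ wsgdMatrix (w10 1) m *ᵥ x = 0 := by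
  have h := Matrix.dotProduct_mulVec_add_transpose_self (wsgdMatrix (w10 1) m) x
  rw [wsgd10_one_add_transpose, Matrix.zero_mulVec, dotProduct_zero] at h
  linarith

end Wsgd10

theorem wsgd10_matrix_eigenvalues_general (α : ℝ) (m : ℕ) :
    (α = 1 → ∀ lam : ℂ,
      (∃ v : Fin m → ℂ, v ≠ 0 ∧
        ((wsgdMatrix (w10 α) m).map Complex.ofReal).mulVec v = lam • v) → lam.re = 0) ∧
    (1 < α → α ≤ 2 →
      (∀ lam : ℂ,
        (∃ v : Fin m → ℂ, v ≠ 0 ∧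
          ((wsgdMatrix (w10 α) m).map Complex.ofReal).mulVec v = lam • v) → lam.re < 0) ∧
      (∀ x : Fin m → ℝ, x ≠ 0 → x ⬝ᵥ (wsgdMatrix (w10 α) m).mulVec x < 0)) := by
  refine ⟨?_, fun h1 h2 => ⟨?_, fun x hx => wsgd10_dotProduct_mulVec_self_neg h1 h2 hx⟩⟩
  · rintro rfl lam ⟨v, hv0, hv⟩
    exact Matrix.re_eq_zero_of_mulVec_eq_smul wsgd10_one_dotProduct_mulVec_self hv0 hv
  · rintro lam ⟨v, hv0, hv⟩
    exact Matrix.re_neg_of_mulVec_eq_smul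
      (fun x hx => wsgd10_dotProduct_mulVec_self_neg h1 h2 hx) hv0 hv

theorem wsgd10_matrix_eigenvalues (α : ℝ) (m : ℕ) (hm : 1 ≤ m) :
    (α = 1 → ∀ lam : ℂ,
      (∃ v : Fin m → ℂ, v ≠ 0 ∧
        ((wsgdMatrix (w10 α) m).map Complex.ofReal).mulVec v = lam • v) → lam.re = 0) ∧
    (1 < α → α ≤ 2 →
      (∀ lam : ℂ,
        (∃ v : Fin m → ℂ, v ≠ 0 ∧
          ((wsgdMatrix (w10 α) m).map Complex.ofReal).mulVec v = lam • v) → lam.re < 0) ∧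
      (∀ x : Fin m → ℝ, x ≠ 0 → x ⬝ᵥ (wsgdMatrix (w10 α) m).mulVec x < 0)) :=
  wsgd10_matrix_eigenvalues_general α m
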